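/- arXiv:2012.14638 — 3 statements merged into one kernel-verified Lean document; each statement's English description precedes it below -/
import Mathlib

section
/- For f, g : ω → ω with f ≤* g (i.e., f(n) ≤ g(n) for all but finitely many n), the least size of an infinite mad family for the ideal 𝓘(g) = ⨁_Fin Fin^{g(n)} is at most the least size of an infinite mad family for 𝓘(f) = ⨁_Fin Fin^{f(n)}; that is, 𝔞_{𝓘(g)} ≤ 𝔞_{𝓘(f)}. -/
/-- The underlying set of the `k`-fold Fubini power of `Fin`. -/
def FinPowSpace : ℕ → Type
  | 0 => PUnit
  | (k+1) => ℕ × FinPowSpace k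

/-- The Fubini powers of the ideal `Fin` of finite sets: `Fin^0` is the trivial ideal,
`Fin^{k+1} = Fin ⊗ Fin^k` (so `Fin^1 ≅ Fin`). -/
def FinPow : (k : ℕ) → Set (Set (FinPowSpace k))
  | 0 => {∅}
  | (k+1) => {X | {n : ℕ | {s | ((n, s) : FinPowSpace (k+1)) ∈ X} ∉ FinPow k}.Finite}

/-- `𝓘(f) = ⨁_Fin Fin^{f(n)}`, the Fubini sum over `Fin` of the ideals `Fin^{f(n)}`. -/
def IdealOf (f : ℕ → ℕ) : Set (Set (Σ n, FinPowSpace (f n))) :=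
  {X | {n : ℕ | {s | (⟨n, s⟩ : Σ n, FinPowSpace (f n)) ∈ X} ∉ FinPow (f n)}.Finite}

/-- An `𝓘`-almost disjoint family. -/
def ADFamily {α : Type*} (I : Set (Set α)) (𝓐 : Set (Set α)) : Prop :=
  (∀ A ∈ 𝓐, A ∉ I) ∧ ∀ A ∈ 𝓐, ∀ B ∈ 𝓐, A ≠ B → A ∩ B ∈ I

/-- An `𝓘`-mad family: maximal among `𝓘`-almost disjoint families. -/
def MadFamily {α : Type*} (I : Set (Set α)) (𝓐 : Set (Set α)) : Prop :=
  ADFamily I 𝓐 ∧ ∀ 𝓑, ADFamily I 𝓑 → 𝓐 ⊆ 𝓑 → 𝓑 = 𝓐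

/-- `𝔞_𝓘`: the least cardinality of an infinite `𝓘`-mad family. -/
noncomputable def aInv {α : Type} (I : Set (Set α)) : Cardinal :=
  sInf {c : Cardinal | ∃ 𝓐, MadFamily I 𝓐 ∧ 𝓐.Infinite ∧ Cardinal.mk ↥𝓐 = c}

/-!
For `k ≤ k'`, a set `Y ⊆ FinPowSpace k'` lies in `Fin^{k'}` iff the set of length-`k` prefixes
over which `Y` has a `Fin^{k'-k}`-positive fibre lies in `Fin^k`; in particular, for the projection
`t` onto the first `k` coordinates, `t⁻¹ A ∈ Fin^{k'} ↔ A ∈ Fin^k`. Doing this in each coordinate `n`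
with `f n ≤ g n` (all but finitely many, which the ideals ignore) gives a map `π : Σ g → Σ f`
with `A ∈ 𝓘(f) ↔ π⁻¹ A ∈ 𝓘(g)`, and a positivity-detecting `P : Set (Σ g) → Set (Σ f)` with
`P (π⁻¹ A ∩ Y) = A ∩ P Y`. Hence `A ↦ π⁻¹ A` is injective on an `𝓘(f)`-ad family and sends
`𝓘(f)`-mad families to `𝓘(g)`-mad ones: if `Y` is `𝓘(g)`-positive, `P Y` meets some member `A`
positively, and then `Y` meets `π⁻¹ A` positively. Infinite `𝓘(f)`-mad families exist (extend an
infinite partition into positive pieces by Zorn), which rules out the junk value `sInf ∅ = 0`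
for `𝔞_{𝓘(f)}`.
-/

open Filter Function Set

section MadFamilies

variable {α : Type*} {I : Set (Set α)} {𝓐 : Set (Set α)}

theorem MadFamily.exists_inter_notMem (h𝓐 : MadFamily I 𝓐) {X : Set α} (hX : X ∉ I) :
    ∃ A ∈ 𝓐, A ∩ X ∉ I := by
  by_contra! hsmall
  have hX𝓐 : X ∉ 𝓐 := fun hX𝓐 => hX (inter_self X ▸ hsmall X hX𝓐)
  have hAD : ADFamily I (insert X 𝓐) := by
    refine ⟨?_, ?_⟩
    · rintro A (rfl | hA)
      exacts [hX, h𝓐.1.1 A hA]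
    · rintro A (rfl | hA) B (rfl | hB) hAB
      exacts [absurd rfl hAB, inter_comm A B ▸ hsmall B hB, hsmall A hA, h𝓐.1.2 A hA B hB hAB]
  exact hX𝓐 (h𝓐.2 _ hAD (subset_insert X 𝓐) ▸ mem_insert X 𝓐)

theorem ADFamily.exists_madFamily_superset (h𝓐 : ADFamily I 𝓐) :
    ∃ 𝓜, 𝓐 ⊆ 𝓜 ∧ MadFamily I 𝓜 := by
  obtain ⟨𝓜, h𝓐𝓜, hmax⟩ := zorn_subset_nonempty {𝓑 | ADFamily I 𝓑} (fun c hc hchain hne =>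
    ⟨⋃₀ c, ⟨fun A ⟨𝓑, h𝓑, hA⟩ => (hc h𝓑).1 A hA, fun A ⟨𝓑₁, h₁, hA⟩ B ⟨𝓑₂, h₂, hB⟩ hAB =>
      (hchain.total h₁ h₂).elim (fun h => (hc h₂).2 A (h hA) B hB hAB)
        (fun h => (hc h₁).2 A hA B (h hB) hAB)⟩,
      fun _ => subset_sUnion_of_mem⟩) 𝓐 h𝓐
  exact ⟨𝓜, h𝓐𝓜, hmax.prop, fun 𝓑 h𝓑 h𝓜𝓑 => (hmax.2 h𝓑 h𝓜𝓑).antisymm h𝓜𝓑⟩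

theorem exists_infinite_madFamily_of_pairwise_disjoint {ι : Type*} [Infinite ι] (hI : ∅ ∈ I)
    {A : ι → Set α} (hA : ∀ i, A i ∉ I) (hdisj : Pairwise (Disjoint on A)) :
    ∃ 𝓐, MadFamily I 𝓐 ∧ 𝓐.Infinite := by
  have hinj : Injective A := fun i j hij => by
    by_contra hne
    have hii : Disjoint (A i) (A j) := hdisj hne
    rw [← hij] at hii
    exact hA i (disjoint_self.1 hii ▸ hI)
  have hAD : ADFamily I (range A) := by
    refine ⟨forall_mem_range.2 hA, ?_⟩
    rintro _ ⟨i, rfl⟩ _ ⟨j, rfl⟩ hij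
    rw [(hdisj fun h => hij (congrArg A h)).inter_eq]
    exact hI
  obtain ⟨𝓜, hA𝓜, h𝓜⟩ := hAD.exists_madFamily_superset
  exact ⟨𝓜, h𝓜, (infinite_range_of_injective hinj).mono hA𝓜⟩

end MadFamilies

structure MadReduction {α β : Type*} (I : Set (Set α)) (J : Set (Set β)) where
  toFun : β → α
  pull : Set β → Set α
  preimage_mem_iff : ∀ A, toFun ⁻¹' A ∈ J ↔ A ∈ I
  pull_mem_iff : ∀ Y, pull Y ∈ I ↔ Y ∈ J
  pull_preimage_inter : ∀ A Y, pull (toFun ⁻¹' A ∩ Y) = A ∩ pull Y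

namespace MadReduction

variable {α β : Type*} {I : Set (Set α)} {J : Set (Set β)} (R : MadReduction I J)
  {𝓐 : Set (Set α)}

theorem injOn_preimage (h𝓐 : ADFamily I 𝓐) : InjOn (preimage R.toFun) 𝓐 := by
  intro A hA B hB hAB
  by_contra hne
  refine h𝓐.1 A hA ((R.preimage_mem_iff A).1 ?_)
  have hAB' : R.toFun ⁻¹' A = R.toFun ⁻¹' (A ∩ B) := by
    rw [preimage_inter, ← show R.toFun ⁻¹' A = R.toFun ⁻¹' B from hAB, inter_self]
  exact hAB' ▸ (R.preimage_mem_iff _).2 (h𝓐.2 A hA B hB hne)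

theorem madFamily_image_preimage (h𝓐 : MadFamily I 𝓐) :
    MadFamily J (preimage R.toFun '' 𝓐) := by
  refine ⟨⟨?_, ?_⟩, fun 𝓑 h𝓑 himage𝓑 => Subset.antisymm (fun Y hY => ?_) himage𝓑⟩
  · rintro _ ⟨A, hA, rfl⟩
    exact (R.preimage_mem_iff A).not.2 (h𝓐.1.1 A hA)
  · rintro _ ⟨A, hA, rfl⟩ _ ⟨B, hB, rfl⟩ hAB
    exact (R.preimage_mem_iff _).2 (h𝓐.1.2 A hA B hB fun h => hAB (h ▸ rfl))
  · obtain ⟨A, hA, hApos⟩ := h𝓐.exists_inter_notMem ((R.pull_mem_iff Y).not.2 (h𝓑.1 Y hY))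
    have hpos : R.toFun ⁻¹' A ∩ Y ∉ J := by
      rwa [← R.pull_mem_iff, R.pull_preimage_inter]
    by_contra hY𝓐
    exact hpos (h𝓑.2 _ (himage𝓑 ⟨A, hA, rfl⟩) Y hY fun h => hY𝓐 ⟨A, hA, h⟩)

end MadReduction

theorem MadReduction.aInv_le {α β : Type} {I : Set (Set α)} {J : Set (Set β)}
    (R : MadReduction I J) (hI : ∃ 𝓐, MadFamily I 𝓐 ∧ 𝓐.Infinite) : aInv J ≤ aInv I := by
  obtain ⟨𝓐, h𝓐⟩ := hI
  refine csInf_le_csInf' ⟨_, 𝓐, h𝓐.1, h𝓐.2, rfl⟩ ?_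
  rintro _ ⟨𝓐, h𝓐, hinf, rfl⟩
  have hinj := R.injOn_preimage h𝓐.1
  exact ⟨_, R.madFamily_image_preimage h𝓐, (infinite_image_iff hinj).2 hinf,
    Cardinal.mk_image_eq_of_injOn _ _ hinj⟩

namespace FinPowSpace

/-- The first `k` coordinates, padded with zeros if `k' < k`. -/
def take : (k k' : ℕ) → FinPowSpace k' → FinPowSpace k
  | 0, _, _ => PUnit.unit
  | k + 1, 0, s => ((0 : ℕ), take k 0 s)
  | k + 1, k' + 1, s => ((s : ℕ × FinPowSpace k').1, take k k' (s : ℕ × FinPowSpace k').2)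

/-- The prefixes `p` of length `k` whose fibre `{t | (p, t) ∈ Y}` is `Fin^{k' - k}`-positive
(empty if `k' < k`). -/
def positivePrefixes : (k k' : ℕ) → Set (FinPowSpace k') → Set (FinPowSpace k)
  | 0, k', Y => {_p | Y ∉ FinPow k'}
  | _ + 1, 0, _ => ∅
  | k + 1, k' + 1, Y => {p | p.2 ∈ positivePrefixes k k' (Prod.mk p.1 ⁻¹' Y)}

theorem mem_finPow_succ_iff {k : ℕ} {X : Set (ℕ × FinPowSpace k)} :
    X ∈ FinPow (k + 1) ↔ ∀ᶠ n in cofinite, Prod.mk n ⁻¹' X ∈ FinPow k := by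
  rw [eventually_cofinite]
  rfl

theorem empty_mem_finPow (k : ℕ) : (∅ : Set (FinPowSpace k)) ∈ FinPow k := by
  induction k with
  | zero => rfl
  | succ k ih => exact mem_finPow_succ_iff.2 (.of_forall fun _ => ih)

theorem univ_notMem_finPow (k : ℕ) : (univ : Set (FinPowSpace k)) ∉ FinPow k := by
  induction k with
  | zero => exact fun h => (Set.ext_iff.1 (h : (univ : Set PUnit) = ∅) PUnit.unit).1 trivial
  | succ k ih =>
    intro h
    obtain ⟨n, hn⟩ := (mem_finPow_succ_iff.1 h).exists
    exact ih hn

theorem positivePrefixes_mem_finPow_iff {k k' : ℕ} (h : k ≤ k') (Y : Set (FinPowSpace k')) :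
    positivePrefixes k k' Y ∈ FinPow k ↔ Y ∈ FinPow k' := by
  induction k generalizing k' with
  | zero =>
    show {_p | Y ∉ FinPow k'} = ∅ ↔ _
    simpa [eq_empty_iff_forall_notMem] using ⟨fun h => h PUnit.unit, fun h _ => h⟩
  | succ k ih =>
    obtain ⟨k', rfl⟩ : ∃ j, k' = j + 1 := ⟨k' - 1, by omega⟩
    exact mem_finPow_succ_iff.trans ((eventually_congr
      (.of_forall fun n => ih (by omega) (Prod.mk n ⁻¹' Y))).trans mem_finPow_succ_iff.symm)

theorem positivePrefixes_univ {k k' : ℕ} (h : k ≤ k') :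
    positivePrefixes k k' (univ : Set (FinPowSpace k')) = univ := by
  induction k generalizing k' with
  | zero => exact eq_univ_of_forall fun _ => univ_notMem_finPow k'
  | succ k ih =>
    obtain ⟨k', rfl⟩ : ∃ j, k' = j + 1 := ⟨k' - 1, by omega⟩
    refine eq_univ_of_forall fun p => ?_
    show p.2 ∈ positivePrefixes k k' univ
    rw [ih (by omega)]
    trivial

theorem positivePrefixes_preimage_take_inter (k k' : ℕ) (A : Set (FinPowSpace k))
    (Y : Set (FinPowSpace k')) :
    positivePrefixes k k' (take k k' ⁻¹' A ∩ Y) = A ∩ positivePrefixes k k' Y := by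
  induction k generalizing k' with
  | zero =>
    by_cases hA : PUnit.unit ∈ A
    · have hA' : take 0 k' ⁻¹' A = univ := eq_univ_of_forall fun _ => hA
      rw [hA', univ_inter]
      exact (inter_eq_right.2 fun _ _ => hA).symm
    · have hA' : take 0 k' ⁻¹' A = ∅ := eq_empty_of_forall_notMem fun _ => hA
      rw [hA', empty_inter]
      ext ⟨⟩
      exact iff_of_false (fun h => h (empty_mem_finPow k')) fun h => hA h.1
  | succ k ih =>
    cases k' with
    | zero => exact (inter_empty A).symm
    | succ k' =>
      ext ⟨n, p⟩
      exact Set.ext_iff.1 (ih k' (Prod.mk n ⁻¹' A) (Prod.mk n ⁻¹' Y)) p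

theorem preimage_take_mem_finPow_iff {k k' : ℕ} (h : k ≤ k') (A : Set (FinPowSpace k)) :
    take k k' ⁻¹' A ∈ FinPow k' ↔ A ∈ FinPow k := by
  rw [← positivePrefixes_mem_finPow_iff h, ← inter_univ (take k k' ⁻¹' A),
    positivePrefixes_preimage_take_inter, positivePrefixes_univ h, inter_univ]

end FinPowSpace

namespace IdealOf

open FinPowSpace

def fiber {f : ℕ → ℕ} (X : Set (Σ n, FinPowSpace (f n))) (n : ℕ) : Set (FinPowSpace (f n)) :=
  {s | ⟨n, s⟩ ∈ X}

theorem mem_iff_eventually {f : ℕ → ℕ} {X : Set (Σ n, FinPowSpace (f n))} :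
    X ∈ IdealOf f ↔ ∀ᶠ n in cofinite, fiber X n ∈ FinPow (f n) := by
  rw [eventually_cofinite]
  rfl

theorem fst_preimage_mem_iff (f : ℕ → ℕ) (S : Set ℕ) :
    (Sigma.fst ⁻¹' S : Set (Σ n, FinPowSpace (f n))) ∈ IdealOf f ↔ S.Finite := by
  rw [mem_iff_eventually, eventually_cofinite]
  congr! 1
  ext n
  by_cases hn : n ∈ S
  · have hfib : fiber (Sigma.fst ⁻¹' S : Set (Σ n, FinPowSpace (f n))) n = univ :=
      eq_univ_of_forall fun _ => hn
    exact iff_of_true (fun h => univ_notMem_finPow _ (hfib ▸ h)) hn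
  · have hfib : fiber (Sigma.fst ⁻¹' S : Set (Σ n, FinPowSpace (f n))) n = ∅ :=
      eq_empty_of_forall_notMem fun _ => hn
    exact iff_of_false (fun h => h (hfib ▸ empty_mem_finPow _)) hn

theorem exists_infinite_madFamily (f : ℕ → ℕ) :
    ∃ 𝓐, MadFamily (IdealOf f) 𝓐 ∧ 𝓐.Infinite := by
  refine exists_infinite_madFamily_of_pairwise_disjoint (ι := ℕ)
    (mem_iff_eventually.2 (.of_forall fun _ => empty_mem_finPow _))
    (A := fun i => {x | (Nat.unpair x.1).1 = i}) (fun i => ?_)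
    fun i j hij => disjoint_left.2 fun _ hi hj => hij (hi.symm.trans hj)
  refine (fst_preimage_mem_iff f {n | (Nat.unpair n).1 = i}).not.2 fun hfin => ?_
  refine (infinite_range_of_injective fun _ _ h => (Nat.pair_eq_pair (a := i).1 h).2).mono ?_ hfin
  rintro _ ⟨m, rfl⟩
  exact congrArg Prod.fst (Nat.unpair_pair i m)

def madReductionOfEventuallyLE {f g : ℕ → ℕ} (hfg : f ≤ᶠ[cofinite] g) :
    MadReduction (IdealOf f) (IdealOf g) where
  toFun x := ⟨x.1, take (f x.1) (g x.1) x.2⟩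
  pull Y := {x | x.2 ∈ positivePrefixes (f x.1) (g x.1) (fiber Y x.1)}
  preimage_mem_iff A := by
    rw [mem_iff_eventually, mem_iff_eventually]
    exact eventually_congr (hfg.mono fun n hn => preimage_take_mem_finPow_iff hn (fiber A n))
  pull_mem_iff Y := by
    rw [mem_iff_eventually, mem_iff_eventually]
    exact eventually_congr (hfg.mono fun n hn => positivePrefixes_mem_finPow_iff hn (fiber Y n))
  pull_preimage_inter A Y := by
    ext ⟨n, s⟩
    exact Set.ext_iff.1
      (positivePrefixes_preimage_take_inter _ _ (fiber A n) (fiber Y n)) s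

end IdealOf

/-- if `f ≤* g` then `𝔞_{𝓘(g)} ≤ 𝔞_{𝓘(f)}`. -/
theorem stmt_8 (f g : ℕ → ℕ) (hfg : {n : ℕ | g n < f n}.Finite) :
    aInv (IdealOf g) ≤ aInv (IdealOf f) :=
  (IdealOf.madReductionOfEventuallyLE (eventually_cofinite.2 (by simpa using hfg))).aInv_le
    (IdealOf.exists_infinite_madFamily f)
end

section
/- Domain extension: let 𝓖 be a cofinitary group of permutations of ω, s a finite injective partial function ω → ω, w ∈ W_{𝓖,X} a word with no proper conjugate subwords, and n ∈ ω \ dom(s). Then for all but finitely many n' ∈ ω, setting s' = s ∪ {(n, n')}, s' is injective and fix(w[s']) = fix(w[s]). -/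
/-- Letters of words in `𝓖 ∗ 𝔽(X)`: elements of `𝓖`, or `X` (`true`) / `X⁻¹` (`false`). -/
abbrev Letter (G : Subgroup (Equiv.Perm ℕ)) := (↥G) ⊕ Bool

/-- Composition of partial functions: apply `g`, then `f`. -/
def pcomp (f g : ℕ → Option ℕ) : ℕ → Option ℕ := fun n => (g n).bind f

open Classical in
/-- Inverse of a partial injection. -/
noncomputable def pinv (s : ℕ → Option ℕ) : ℕ → Option ℕ :=
  fun m => if h : ∃ n, s n = some m then some h.choose else none

/-- `s` is a finite injective partial function from `ω` to `ω`. -/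
def FinInj (s : ℕ → Option ℕ) : Prop :=
  (∀ a b c : ℕ, s a = some c → s b = some c → a = b) ∧ {n : ℕ | s n ≠ none}.Finite

/-- Evaluation of a single letter, substituting `s` for `X` and `s⁻¹` for `X⁻¹`. -/
noncomputable def lEval (G : Subgroup (Equiv.Perm ℕ)) (s : ℕ → Option ℕ) :
    Letter G → ℕ → Option ℕ
  | Sum.inl g => fun n => some ((g : Equiv.Perm ℕ) n)
  | Sum.inr true => s
  | Sum.inr false => pinv s

/-- `w[s]`: evaluation of a word (leftmost letter applied last). -/
noncomputable def ev (G : Subgroup (Equiv.Perm ℕ)) (s : ℕ → Option ℕ) :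
    List (Letter G) → ℕ → Option ℕ
  | [] => fun n => some n
  | a :: l => pcomp (lEval G s a) (ev G s l)

/-- The formal inverse of a word. -/
def wordInv (G : Subgroup (Equiv.Perm ℕ)) (l : List (Letter G)) : List (Letter G) :=
  (l.map (fun a => match a with
    | Sum.inl g => Sum.inl g⁻¹
    | Sum.inr b => Sum.inr (!b))).reverse

/-- The set of fixed points of a partial function. -/
def fixSet (f : ℕ → Option ℕ) : Set ℕ := {m : ℕ | f m = some m}

/-- `w` has no proper conjugated subword: it is not of the form `v⁻¹ w₀ v` with `v` nonempty. -/
def NoProperConjSub (G : Subgroup (Equiv.Perm ℕ)) (w : List (Letter G)) : Prop :=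
  ¬ ∃ v w₀ : List (Letter G), v ≠ [] ∧ w = wordInv G v ++ w₀ ++ v

/-- `w` is a reduced word: no identity letters from `𝓖`, no two adjacent letters
from `𝓖`, and no adjacent cancelling pair `X X⁻¹` or `X⁻¹ X`. -/
def ReducedWord (G : Subgroup (Equiv.Perm ℕ)) (w : List (Letter G)) : Prop :=
  (∀ g : ↥G, Sum.inl g ∈ w → g ≠ 1) ∧
  w.Chain' (fun a b =>
    match a, b with
    | Sum.inl _, Sum.inl _ => False
    | Sum.inr b₁, Sum.inr b₂ => b₁ = b₂
    | _, _ => True)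

/-- `𝓖` is a cofinitary group: every nonidentity element has finitely many fixed points. -/
def Cofinitary (G : Subgroup (Equiv.Perm ℕ)) : Prop :=
  ∀ g : ↥G, g ≠ 1 → {m : ℕ | (g : Equiv.Perm ℕ) m = m}.Finite

/-!
Call `n'` generic if every nontrivial product `f` of at most two letters of `w` satisfies
`f n' ≠ n'` and sends `n'` (as does `f⁻¹`) outside `dom s ∪ ran s ∪ {n}`; cofinitarity leaves
only finitely many non-generic `n'`. For generic `n'`, `w[s] ⊆ w[s']`, and a computation of
`w[s']` at a fixed point that never visits `n'` is already a computation of `w[s]`. A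
computation through `n'` is impossible: off `dom s' ∪ ran s'` only letters of `𝓖` act, and two
such letters are never adjacent, so the cycle through `n'` can leave or reach `n'` by a letter
of `𝓖` only at an end of `w`. Chasing the few remaining cases forces `w = X ⋯ X⁻¹` or
`w = g⁻¹ X ⋯ X⁻¹ g`, which have proper conjugated subwords.
-/

open Function

section PartialMaps

variable {t : ℕ → Option ℕ} {n v x y : ℕ}

def PartialInj (t : ℕ → Option ℕ) : Prop :=
  ∀ a b c : ℕ, t a = some c → t b = some c → a = b

def Untouched (t : ℕ → Option ℕ) (x : ℕ) : Prop :=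
  t x = none ∧ ∀ a, t a ≠ some x

theorem apply_eq_some_of_pinv_eq_some (h : pinv t x = some y) : t y = some x := by
  unfold pinv at h
  split_ifs at h with hex
  exact Option.some.inj h ▸ hex.choose_spec

theorem pinv_eq_some_iff (hinj : PartialInj t) : pinv t x = some y ↔ t y = some x := by
  refine ⟨apply_eq_some_of_pinv_eq_some, fun h => ?_⟩
  have hex : ∃ a, t a = some x := ⟨y, h⟩
  simp only [pinv, dif_pos hex, hinj _ _ _ hex.choose_spec h]

theorem update_some_eq_some_iff {a b : ℕ} :
    update t n (some v) a = some b ↔ (a = n ∧ b = v) ∨ (a ≠ n ∧ t a = some b) := by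
  by_cases ha : a = n
  · simp [ha, eq_comm]
  · simp [ha]

theorem PartialInj.update_some (hinj : PartialInj t) (hv : ∀ a, t a ≠ some v) :
    PartialInj (update t n (some v)) := by
  intro a b c ha hb
  rw [update_some_eq_some_iff] at ha hb
  rcases ha with ⟨rfl, rfl⟩ | ⟨-, ha⟩
  · rcases hb with ⟨rfl, -⟩ | ⟨-, hb⟩
    exacts [rfl, (hv b hb).elim]
  · rcases hb with ⟨rfl, rfl⟩ | ⟨-, hb⟩
    exacts [(hv a ha).elim, hinj a b c ha hb]

theorem FinInj.update_some (hs : FinInj t) (hv : ∀ a, t a ≠ some v) :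
    FinInj (update t n (some v)) := by
  refine ⟨PartialInj.update_some hs.1 hv,
    (hs.2.union (Set.finite_singleton n)).subset fun a ha => ?_⟩
  by_cases han : a = n
  · exact Or.inr han
  · exact Or.inl (by simpa [update_of_ne han] using ha)

theorem Untouched.update_some (hx : Untouched t x) (hxn : x ≠ n) (hxv : x ≠ v) :
    Untouched (update t n (some v)) x := by
  refine ⟨by rw [update_of_ne hxn, hx.1], fun a ha => ?_⟩
  rcases update_some_eq_some_iff.mp ha with ⟨-, rfl⟩ | ⟨-, ha⟩
  exacts [hxv rfl, hx.2 a ha]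

theorem finite_setOf_not_untouched (hfin : {a | t a ≠ none}.Finite) :
    {x | ¬ Untouched t x}.Finite := by
  refine (hfin.union (hfin.image fun a => (t a).getD 0)).subset fun x hx => ?_
  simp only [Untouched, not_and_or, not_forall, not_not] at hx
  rcases hx with hx | ⟨a, ha⟩
  · exact Or.inl hx
  · exact Or.inr ⟨a, by simp [ha], by simp [ha]⟩

end PartialMaps

section Evaluation

variable {G : Subgroup (Equiv.Perm ℕ)} {t : ℕ → Option ℕ} {a : Letter G}
  {p q : List (Letter G)} {x y : ℕ}

theorem lEval_inl (g : G) : lEval G t (Sum.inl g) x = some (g • x) := rfl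

theorem ev_cons : ev G t (a :: p) x = (ev G t p x).bind (lEval G t a) := rfl

theorem ev_append : ev G t (p ++ q) x = (ev G t q x).bind (ev G t p) := by
  induction p generalizing x with
  | nil => simp [ev]
  | cons b p ih =>
    simp only [List.cons_append, ev_cons, ih, Option.bind_assoc]
    rfl

theorem ev_append_singleton : ev G t (p ++ [a]) x = (lEval G t a x).bind (ev G t p) := by
  rw [ev_append]
  rfl

theorem ev_append_inl (g : G) : ev G t (p ++ [Sum.inl g]) x = ev G t p (g • x) := by
  rw [ev_append_singleton, lEval_inl, Option.bind_some]

theorem ev_inl_cons_eq_some (g : G) :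
    ev G t (Sum.inl g :: p) x = some y ↔ ev G t p x = some (g⁻¹ • y) := by
  rw [ev_cons]
  cases ev G t p x <;> simp [lEval_inl, eq_inv_smul_iff]

theorem exists_inl_of_lEval_of_untouched_input (hx : Untouched t x)
    (h : lEval G t a x = some y) : ∃ g, a = Sum.inl g := by
  rcases a with g | _ | _
  · exact ⟨g, rfl⟩
  · exact (hx.2 y (apply_eq_some_of_pinv_eq_some h)).elim
  · exact absurd h (by simp [lEval, hx.1])

theorem exists_inl_of_lEval_of_untouched_output (hy : Untouched t y)
    (h : lEval G t a x = some y) : ∃ g, a = Sum.inl g := by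
  rcases a with g | _ | _
  · exact ⟨g, rfl⟩
  · exact absurd (apply_eq_some_of_pinv_eq_some h) (by simp [hy.1])
  · exact (hy.2 x h).elim

theorem exists_inl_of_ev_append_singleton (hx : Untouched t x)
    (h : ev G t (p ++ [a]) x = some y) : ∃ g, a = Sum.inl g := by
  rw [ev_append_singleton] at h
  obtain ⟨z, hz, -⟩ := Option.bind_eq_some_iff.mp h
  exact exists_inl_of_lEval_of_untouched_input hx hz

theorem exists_inl_of_ev_cons (hy : Untouched t y)
    (h : ev G t (a :: p) x = some y) : ∃ g, a = Sum.inl g := by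
  obtain ⟨z, -, hz⟩ := Option.bind_eq_some_iff.mp h
  exact exists_inl_of_lEval_of_untouched_output hy hz

end Evaluation

section Words

variable {G : Subgroup (Equiv.Perm ℕ)} {t : ℕ → Option ℕ} {w p q u : List (Letter G)}
  {g h k : G} {v x y m : ℕ}

theorem ReducedWord.infix (hw : ReducedWord G w) (h : u <:+: w) : ReducedWord G u :=
  ⟨fun g hg => hw.1 g (h.subset hg), hw.2.infix h⟩

theorem not_reducedWord_inl_inl (g h : G) : ¬ ReducedWord G [Sum.inl g, Sum.inl h] :=
  fun hw => List.isChain_pair.mp hw.2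

theorem not_reducedWord_Xinv_X : ¬ ReducedWord G [Sum.inr false, Sum.inr true] :=
  fun hw => Bool.false_ne_true (List.isChain_pair.mp hw.2 :)

def IsGeneric (t : ℕ → Option ℕ) (w : List (Letter G)) (v : ℕ) : Prop :=
  ∀ g h : G, (Sum.inl g ∈ w ∨ g = 1) → (Sum.inl h ∈ w ∨ h = 1) → g * h ≠ 1 →
    Untouched t ((g * h) • v) ∧ Untouched t ((g * h)⁻¹ • v)

theorem IsGeneric.mono (hgen : IsGeneric t w v) (h : u ⊆ w) : IsGeneric t u v :=
  fun g k hg hk => hgen g k (hg.imp_left (@h _)) (hk.imp_left (@h _))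

theorem IsGeneric.untouched_smul (hgen : IsGeneric t w v) (hred : ReducedWord G w)
    (hg : Sum.inl g ∈ w) : Untouched t (g • v) ∧ Untouched t (g⁻¹ • v) := by
  simpa using hgen g 1 (Or.inl hg) (Or.inr rfl) (by simpa using hred.1 g hg)

theorem eq_nil_of_ev_append_inl (hred : ReducedWord G (u ++ [Sum.inl k]))
    (hk : Untouched t (k • x)) (h : ev G t (u ++ [Sum.inl k]) x = some y) : u = [] := by
  rcases List.eq_nil_or_concat' u with rfl | ⟨u, a, rfl⟩
  · rfl
  rw [ev_append_inl] at h
  obtain ⟨g, rfl⟩ := exists_inl_of_ev_append_singleton hk h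
  exact absurd (hred.infix ⟨u, [], by simp⟩) (not_reducedWord_inl_inl g k)

theorem eq_nil_of_ev_inl_cons (hred : ReducedWord G (Sum.inl k :: u))
    (hk : Untouched t (k⁻¹ • y)) (h : ev G t (Sum.inl k :: u) x = some y) : u = [] := by
  rcases u with _ | ⟨a, u⟩
  · rfl
  rw [ev_inl_cons_eq_some] at h
  obtain ⟨g, rfl⟩ := exists_inl_of_ev_cons hk h
  exact absurd (hred.infix ⟨[], u, by simp⟩) (not_reducedWord_inl_inl k g)

theorem exists_eq_append_Xinv_or_eq_singleton (htv : t v = none) (hred : ReducedWord G w)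
    (hgen : IsGeneric t w v) (hne : w ≠ []) (h : ev G t w v = some y) :
    (∃ p, w = p ++ [Sum.inr false]) ∨ ∃ g, w = [Sum.inl g] ∧ y = g • v := by
  obtain ⟨u, a, rfl⟩ := (List.eq_nil_or_concat' w).resolve_left hne
  rcases a with g | _ | _
  · obtain rfl := eq_nil_of_ev_append_inl hred (hgen.untouched_smul hred (by simp)).1 h
    rw [List.nil_append, ← List.nil_append [_], ev_append_inl] at h
    exact Or.inr ⟨g, rfl, (Option.some.inj h).symm⟩
  · exact Or.inl ⟨u, rfl⟩
  · simp [ev_append_singleton, lEval, htv] at h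

theorem exists_eq_X_cons_or_eq_singleton (htv : t v = none) (hred : ReducedWord G w)
    (hgen : IsGeneric t w v) (hne : w ≠ []) (h : ev G t w x = some v) :
    (∃ q, w = Sum.inr true :: q) ∨ ∃ g, w = [Sum.inl g] ∧ x = g⁻¹ • v := by
  obtain ⟨a, u, rfl⟩ := List.exists_cons_of_ne_nil hne
  rcases a with g | _ | _
  · obtain rfl := eq_nil_of_ev_inl_cons hred (hgen.untouched_smul hred (by simp)).2 h
    rw [ev_inl_cons_eq_some] at h
    exact Or.inr ⟨g, rfl, Option.some.inj h⟩
  · obtain ⟨z, -, hz⟩ := Option.bind_eq_some_iff.mp h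
    simp [apply_eq_some_of_pinv_eq_some hz] at htv
  · exact Or.inl ⟨u, rfl⟩

theorem exists_eq_X_cons_append_Xinv (htv : t v = none) (hv : ¬ Untouched t v)
    (hred : ReducedWord G w) (hgen : IsGeneric t w v) (hne : w ≠ [])
    (h : ev G t w v = some v) : ∃ r, w = Sum.inr true :: (r ++ [Sum.inr false]) := by
  rcases exists_eq_X_cons_or_eq_singleton htv hred hgen hne h with ⟨q, rfl⟩ | ⟨g, rfl, hg⟩
  · rcases exists_eq_append_Xinv_or_eq_singleton htv hred hgen hne h with ⟨p, hp⟩ | ⟨g, hg, -⟩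
    · rcases List.eq_nil_or_concat' q with rfl | ⟨r, b, rfl⟩
      · simpa using congrArg List.getLast? hp
      · have hb := congrArg List.getLast? hp
        simp only [← List.cons_append, List.getLast?_append, List.getLast?_singleton,
          Option.some_or, Option.some.injEq] at hb
        exact ⟨r, by rw [hb]⟩
    · simp at hg
  · have hgv := (hgen.untouched_smul hred (g := g) (by simp)).2
    rw [← hg] at hgv
    exact (hv hgv).elim

theorem false_of_ev_inl_cons (htv : t v = none) (hv : ¬ Untouched t v)
    (hred : ReducedWord G (Sum.inl h :: q)) (hw : NoProperConjSub G (Sum.inl h :: q))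
    (hgen : IsGeneric t (Sum.inl h :: q) v) (hq : q ≠ []) (hev : ev G t q (h • v) = some v) :
    False := by
  have hh := (hgen.untouched_smul hred (g := h) (by simp)).1
  obtain ⟨u, a, rfl⟩ := (List.eq_nil_or_concat' q).resolve_left hq
  obtain ⟨k, rfl⟩ := exists_inl_of_ev_append_singleton hh hev
  have hred' : ReducedWord G (u ++ [Sum.inl k]) := hred.infix (List.suffix_cons _ _).isInfix
  have hu : u ≠ [] := by
    rintro rfl
    exact not_reducedWord_inl_inl h k hred
  have hkh : k * h = 1 := by
    by_contra hkh
    refine hu (eq_nil_of_ev_append_inl hred' ?_ hev)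
    simpa [mul_smul] using (hgen k h (Or.inl (by simp)) (Or.inl (by simp)) hkh).1
  rw [ev_append_inl, smul_smul, hkh, one_smul] at hev
  obtain ⟨r, rfl⟩ := exists_eq_X_cons_append_Xinv htv hv
    (hred'.infix (List.prefix_append _ _).isInfix) (hgen.mono fun _ hb => by simp [hb]) hu hev
  obtain rfl := eq_inv_of_mul_eq_one_left hkh
  exact hw ⟨[Sum.inr false, Sum.inl h⁻¹], r, by simp, by simp [wordInv]⟩

theorem false_of_ev_append_inl (htv : t v = none) (hv : ¬ Untouched t v)
    (hred : ReducedWord G (p ++ [Sum.inl g])) (hw : NoProperConjSub G (p ++ [Sum.inl g]))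
    (hgen : IsGeneric t (p ++ [Sum.inl g]) v) (hp : p ≠ [])
    (hev : ev G t p v = some (g⁻¹ • v)) : False := by
  have hg := (hgen.untouched_smul hred (g := g) (by simp)).2
  obtain ⟨a, u, rfl⟩ := List.exists_cons_of_ne_nil hp
  obtain ⟨k, rfl⟩ := exists_inl_of_ev_cons hg hev
  have hred' : ReducedWord G (Sum.inl k :: u) := hred.infix (List.prefix_append _ _).isInfix
  have hu : u ≠ [] := by
    rintro rfl
    exact not_reducedWord_inl_inl k g hred
  have hgk : g * k = 1 := by
    by_contra hgk
    refine hu (eq_nil_of_ev_inl_cons hred' ?_ hev)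
    simpa [mul_smul] using (hgen g k (Or.inl (by simp)) (Or.inl (by simp)) hgk).2
  rw [ev_inl_cons_eq_some, smul_smul, ← mul_inv_rev, hgk, inv_one, one_smul] at hev
  obtain ⟨r, rfl⟩ := exists_eq_X_cons_append_Xinv htv hv
    (hred'.infix (List.suffix_cons _ _).isInfix) (hgen.mono fun _ hb => by simp [hb]) hu hev
  obtain rfl := eq_inv_of_mul_eq_one_right hgk
  exact hw ⟨[Sum.inr false, Sum.inl g], r, by simp, by simp [wordInv]⟩

theorem false_of_ev_append_eq_some (htv : t v = none) (hv : ¬ Untouched t v)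
    (hred : ReducedWord G (p ++ q)) (hw : NoProperConjSub G (p ++ q))
    (hgen : IsGeneric t (p ++ q) v) (hne : p ++ q ≠ [])
    (hq : ev G t q m = some v) (hp : ev G t p v = some m) : False := by
  by_cases hpq : p = [] ∨ q = []
  · have hloop : ev G t (p ++ q) v = some v := by
      rcases hpq with rfl | rfl
      · obtain rfl : v = m := Option.some.inj hp
        exact hq
      · obtain rfl : m = v := Option.some.inj hq
        simpa using hp
    obtain ⟨r, hr⟩ := exists_eq_X_cons_append_Xinv htv hv hred hgen hne hloop
    exact hw ⟨[Sum.inr false], r, by simp, by simp [hr, wordInv]⟩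
  obtain ⟨hp0, hq0⟩ := not_or.mp hpq
  rcases exists_eq_append_Xinv_or_eq_singleton htv (hred.infix (List.prefix_append _ _).isInfix)
    (hgen.mono fun _ hb => by simp [hb]) hp0 hp with ⟨p', rfl⟩ | ⟨h, rfl, rfl⟩
  · rcases exists_eq_X_cons_or_eq_singleton htv (hred.infix (List.suffix_append _ _).isInfix)
      (hgen.mono fun _ hb => by simp [hb]) hq0 hq with ⟨q', rfl⟩ | ⟨g, rfl, rfl⟩
    · exact not_reducedWord_Xinv_X (hred.infix ⟨p', q', by simp⟩)
    · exact false_of_ev_append_inl htv hv hred hw hgen hp0 hp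
  · exact false_of_ev_inl_cons htv hv hred hw hgen hq0 hq

end Words

section Extension

variable {G : Subgroup (Equiv.Perm ℕ)} {t t' : ℕ → Option ℕ} {w : List (Letter G)}
  {a : Letter G} {n v x y : ℕ}

theorem lEval_of_le (hle : ∀ a b, t a = some b → t' a = some b) (hinj' : PartialInj t')
    (h : lEval G t a x = some y) : lEval G t' a x = some y := by
  rcases a with g | _ | _
  · exact h
  · exact (pinv_eq_some_iff hinj').mpr (hle _ _ (apply_eq_some_of_pinv_eq_some h))
  · exact hle _ _ h

theorem ev_of_le (hle : ∀ a b, t a = some b → t' a = some b) (hinj' : PartialInj t')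
    (h : ev G t w x = some y) : ev G t' w x = some y := by
  induction w generalizing y with
  | nil => exact h
  | cons a w ih =>
    obtain ⟨z, hz, ha⟩ := Option.bind_eq_some_iff.mp h
    exact Option.bind_eq_some_iff.mpr ⟨z, ih hz, lEval_of_le hle hinj' ha⟩

theorem fixSet_ev_subset_update (hinj : PartialInj t) (hn : t n = none)
    (hv : ∀ a, t a ≠ some v) : fixSet (ev G t w) ⊆ fixSet (ev G (update t n (some v)) w) := by
  refine fun m hm => ev_of_le (fun a b hab => ?_) (hinj.update_some hv) hm
  have han : a ≠ n := by
    rintro rfl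
    simp [hn] at hab
  rwa [update_of_ne han]

theorem lEval_update_eq (hinj : PartialInj t) (hn : t n = none) (hv : ∀ a, t a ≠ some v)
    (hx : x ≠ v) (h : lEval G (update t n (some v)) a x ≠ some v) :
    lEval G (update t n (some v)) a x = lEval G t a x := by
  rcases a with g | _ | _
  · rfl
  · ext y
    simp only [lEval]
    rw [pinv_eq_some_iff (hinj.update_some hv), pinv_eq_some_iff hinj, update_some_eq_some_iff]
    refine ⟨fun hy => (by simpa [hx] using hy : _ ∧ _).2, fun hy => Or.inr ⟨?_, hy⟩⟩
    rintro rfl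
    simp [hn] at hy
  · have hxn : x ≠ n := by
      rintro rfl
      simp [lEval] at h
    simp [lEval, update_of_ne hxn]

theorem ev_update_eq_of_forall_suffix (hinj : PartialInj t) (hn : t n = none)
    (hv : ∀ a, t a ≠ some v)
    (h : ∀ u, u <:+ w → ev G (update t n (some v)) u x ≠ some v) :
    ev G (update t n (some v)) w x = ev G t w x := by
  induction w with
  | nil => rfl
  | cons a w ih =>
    rw [ev_cons, ev_cons, ← ih fun u hu => h u (hu.trans (List.suffix_cons a w))]
    cases hz : ev G (update t n (some v)) w x with
    | none => rfl
    | some z =>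
      refine lEval_update_eq hinj hn hv (fun hzv => h w (List.suffix_cons a w) (hzv ▸ hz)) ?_
      simpa [ev_cons, hz] using h (a :: w) List.suffix_rfl

theorem fixSet_ev_update_subset (hinj : PartialInj t) (hn : t n = none) (hu : Untouched t v)
    (hvn : v ≠ n) (hred : ReducedWord G w) (hw : NoProperConjSub G w)
    (hgen : IsGeneric (update t n (some v)) w v) :
    fixSet (ev G (update t n (some v)) w) ⊆ fixSet (ev G t w) := by
  intro m (hm : ev G (update t n (some v)) w m = some m)
  rcases eq_or_ne w [] with rfl | hne
  · exact hm
  by_cases hpass : ∃ u, u <:+ w ∧ ev G (update t n (some v)) u m = some v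
  · obtain ⟨u, ⟨p, rfl⟩, hum⟩ := hpass
    rw [ev_append, hum, Option.bind_some] at hm
    have htv : update t n (some v) v = none := by rw [update_of_ne hvn, hu.1]
    exact (false_of_ev_append_eq_some htv (fun h => h.2 n (by simp)) hred hw hgen hne hum hm).elim
  · simp only [not_exists, not_and] at hpass
    rwa [ev_update_eq_of_forall_suffix hinj hn hu.2 hpass] at hm

end Extension

section Finiteness

variable {G : Subgroup (Equiv.Perm ℕ)} {t : ℕ → Option ℕ} {T : Set ℕ}

theorem Cofinitary.finite_setOf_smul_mem (hG : Cofinitary G) (f : G) (hT : T.Finite) :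
    {x | f ≠ 1 ∧ (f • x ∈ T ∨ f⁻¹ • x ∈ T ∨ f • x = x)}.Finite := by
  by_cases hf : f = 1
  · simp [hf]
  refine (((hT.preimage (MulAction.injective f).injOn).union
    (hT.preimage (MulAction.injective f⁻¹).injOn)).union (hG f hf)).subset ?_
  rintro x ⟨-, hx | hx | hx⟩
  exacts [Or.inl (Or.inl hx), Or.inl (Or.inr hx), Or.inr hx]

theorem finite_setOf_not_isGeneric (hG : Cofinitary G) (hfin : {a | t a ≠ none}.Finite)
    (n : ℕ) (w : List (Letter G)) :
    {v | ¬ (Untouched t v ∧ v ≠ n ∧ IsGeneric (update t n (some v)) w v)}.Finite := by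
  set T := {x | ¬ (Untouched t x ∧ x ≠ n)}
  have hT : T.Finite := ((Set.finite_singleton n).union (finite_setOf_not_untouched hfin)).subset
    fun x hx => by
      by_cases hxn : x = n
      exacts [Or.inl hxn, Or.inr fun hu => hx ⟨hu, hxn⟩]
  set L : Set G := {g | Sum.inl g ∈ w} ∪ {1}
  have hL : L.Finite :=
    (w.finite_toSet.preimage Sum.inl_injective.injOn).union (Set.finite_singleton 1)
  refine (hT.union (hL.biUnion fun g _ => hL.biUnion fun h _ =>
    hG.finite_setOf_smul_mem (g * h) hT)).subset fun v hv => ?_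
  by_contra hvT
  simp only [Set.mem_union, Set.mem_iUnion, not_or, not_exists] at hvT
  obtain ⟨hvT, hgen⟩ := hvT
  refine hv ⟨(not_not.mp hvT).1, (not_not.mp hvT).2, fun g h hg hh hgh => ?_⟩
  have hgh' : ¬ (_ ∨ _ ∨ _) := fun h' => hgen g hg h hh ⟨hgh, h'⟩
  rw [not_or, not_or] at hgh'
  obtain ⟨hgv, hgv', hfix⟩ := hgh'
  obtain ⟨hu, hn⟩ := not_not.mp hgv
  obtain ⟨hu', hn'⟩ := not_not.mp hgv'
  exact ⟨hu.update_some hn hfix, hu'.update_some hn' (by rwa [ne_eq, inv_smul_eq_iff, eq_comm])⟩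

end Finiteness

/-- Domain Extension: let `𝓖` be a cofinitary group, `s` a finite injective
partial function on `ω`, `w ∈ W_{𝓖,X}` a (reduced) word with no proper conjugate subwords,
and `n ∉ dom(s)`. Then for all but finitely many `n'`, the extension
`s' = s ∪ {(n,n')}` is a finite injective partial function and `fix(w[s']) = fix(w[s])`. -/
theorem stmt_12 (G : Subgroup (Equiv.Perm ℕ)) (hG : Cofinitary G)
    (s : ℕ → Option ℕ) (hs : FinInj s)
    (w : List (Letter G)) (hred : ReducedWord G w) (hw : NoProperConjSub G w)
    (n : ℕ) (hn : s n = none) :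
    {n' : ℕ | ¬ (FinInj (Function.update s n (some n')) ∧
        fixSet (ev G (Function.update s n (some n')) w) = fixSet (ev G s w))}.Finite := by
  refine (finite_setOf_not_isGeneric hG hs.2 n w).subset fun n' hbad => ?_
  by_contra hgood
  obtain ⟨hu, hn'n, hgen⟩ := not_not.mp hgood
  exact hbad ⟨hs.update_some hu.2, (fixSet_ev_update_subset hs.1 hn hu hn'n hred hw hgen).antisymm
    (fixSet_ev_subset_update hs.1 hn hu.2)⟩
end

section
/- For any analytic hypergraph G = (X, H) on a Polish space, there exists a Borel maximal G-discrete set if and only if there exists an analytic maximal G-discrete set. -/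
/-!
The complement of a maximal discrete set `D` consists exactly of the points `x` caught by `D`,
i.e. such that some hyperedge lies in `D ∪ {x}`. When `H` and `D` are analytic, the set of
caught points is the projection of a countable intersection of analytic sets (one for each
vertex position of the hyperedge), hence analytic. So `D` is analytic and co-analytic, hence
Borel by Suslin's theorem.
-/

open MeasureTheory

/-- `D` is `G`-discrete for the hypergraph with hyperedges `H` (finite subsets of `X`
encoded as lists without duplicates): no hyperedge has all its vertices in `D`. -/
def HDiscrete {X : Type*} (H : Set (List X)) (D : Set X) : Prop :=
  ∀ l ∈ H, ¬ ∀ x ∈ l, x ∈ D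

/-- `D` is a maximal `G`-discrete set. -/
def MaxHDiscrete {X : Type*} (H : Set (List X)) (D : Set X) : Prop :=
  HDiscrete H D ∧ ∀ D' : Set X, HDiscrete H D' → D ⊆ D' → D' = D

open Set Filter Topology

theorem nhds_cons_eq_map {α : Type*} [TopologicalSpace α] (a : α) (l : List α) :
    𝓝 (a :: l) = (𝓝 a ×ˢ 𝓝 l).map fun p => p.1 :: p.2 := by
  rw [nhds_cons, Filter.map_prod]; rfl

namespace List

variable {α : Type*}

theorem forall_mem_iff_forall_getD {p : α → Prop} {x : α} (hx : p x)
    (l : List α) : (∀ a ∈ l, p a) ↔ ∀ i, p (l.getD i x) := by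
  refine ⟨fun h i => ?_, fun h a ha => ?_⟩
  · rcases lt_or_ge i l.length with hi | hi
    · rw [getD_eq_getElem _ _ hi]; exact h _ (getElem_mem hi)
    · rwa [getD_eq_default _ _ hi]
  · obtain ⟨i, hi, rfl⟩ := getElem_of_mem ha
    simpa only [getD_eq_getElem _ _ hi] using h i

variable [TopologicalSpace α]

theorem tendsto_getD (l : List α) (i : ℕ) (x : α) :
    Tendsto (fun p : List α × α => p.1.getD i p.2) (𝓝 l ×ˢ 𝓝 x) (𝓝 (l.getD i x)) := by
  induction l generalizing i with
  | nil =>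
    rw [nhds_nil, Filter.pure_prod, Filter.tendsto_map'_iff]; exact tendsto_id
  | cons a l ih =>
    rw [nhds_cons_eq_map, Filter.prod_map_left, Filter.tendsto_map'_iff]
    cases i with
    | zero => exact tendsto_fst.comp tendsto_fst
    | succ i => exact (ih i).comp ((tendsto_snd.comp tendsto_fst).prodMk tendsto_snd)

theorem continuous_getD (i : ℕ) : Continuous fun p : List α × α => p.1.getD i p.2 :=
  continuous_iff_continuousAt.2 fun ⟨l, x⟩ => by
    rw [ContinuousAt, nhds_prod_eq]; exact tendsto_getD l i x

end List

theorem MeasureTheory.AnalyticSet.union {α : Type*} [TopologicalSpace α] {s t : Set α}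
    (hs : AnalyticSet s) (ht : AnalyticSet t) : AnalyticSet (s ∪ t) := by
  rw [union_eq_iUnion]
  exact AnalyticSet.iUnion (Bool.forall_bool.2 ⟨ht, hs⟩)

section Hypergraph

variable {X : Type*} {H : Set (List X)} {D : Set X}

def HCaught (H : Set (List X)) (D : Set X) (x : X) : Prop :=
  ∃ l ∈ H, ∀ a ∈ l, a ∈ insert x D

theorem HDiscrete.notMem_of_hCaught (hD : HDiscrete H D) {x : X} (hx : HCaught H D x) :
    x ∉ D := by
  obtain ⟨l, hl, hlx⟩ := hx
  intro hxD
  exact hD l hl fun a ha => by simpa [hxD] using hlx a ha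

theorem MaxHDiscrete.hCaught_of_notMem (hD : MaxHDiscrete H D) {x : X} (hx : x ∉ D) :
    HCaught H D x := by
  by_contra hfree
  have hdisc : HDiscrete H (insert x D) := fun l hl hlx => hfree ⟨l, hl, hlx⟩
  exact hx (hD.2 _ hdisc (subset_insert x D) ▸ mem_insert x D)

theorem MaxHDiscrete.compl_eq (hD : MaxHDiscrete H D) : Dᶜ = {x | HCaught H D x} :=
  Set.ext fun _ => ⟨hD.hCaught_of_notMem, hD.1.notMem_of_hCaught⟩

variable [TopologicalSpace X]

theorem MeasureTheory.AnalyticSet.setOf_hCaught [PolishSpace X] (hH : AnalyticSet H)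
    (hD : AnalyticSet D) : AnalyticSet {x | HCaught H D x} := by
  obtain ⟨β, _, _, g, hg, rfl⟩ := analyticSet_iff_exists_polishSpace_range.1 hH
  have hinsert : AnalyticSet {q : X × X | q.2 ∈ insert q.1 D} :=
    (isClosed_eq continuous_snd continuous_fst).analyticSet.union (hD.preimage continuous_snd)
  have hset : {x | HCaught (range g) D x} = Prod.fst ''
      ⋂ i, (fun p : X × β => (p.1, (g p.2).getD i p.1)) ⁻¹' {q | q.2 ∈ insert q.1 D} := by
    ext x
    simp only [HCaught, mem_ofPred_eq, exists_range_iff, mem_image, mem_iInter, mem_preimage,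
      Prod.exists, exists_and_right, exists_eq_right,
      List.forall_mem_iff_forall_getD (mem_insert x D)]
  rw [hset]
  refine (AnalyticSet.iInter fun i => hinsert.preimage ?_).image_of_continuous continuous_fst
  exact continuous_fst.prodMk
    ((List.continuous_getD i).comp ((hg.comp continuous_snd).prodMk continuous_fst))

theorem MaxHDiscrete.measurableSet [PolishSpace X] [MeasurableSpace X] [BorelSpace X]
    (hD : MaxHDiscrete H D) (hH : AnalyticSet H) (hDa : AnalyticSet D) : MeasurableSet D :=
  hDa.measurableSet_of_compl (hD.compl_eq ▸ hH.setOf_hCaught hDa)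

end Hypergraph

theorem stmt_18_general {X : Type} [TopologicalSpace X] [PolishSpace X]
    [MeasurableSpace X] [BorelSpace X]
    (H : Set (List X)) (hH : AnalyticSet H) :
    (∃ D : Set X, MeasurableSet D ∧ MaxHDiscrete H D) ↔
      (∃ D : Set X, AnalyticSet D ∧ MaxHDiscrete H D) :=
  ⟨fun ⟨D, hmeas, hmax⟩ => ⟨D, hmeas.analyticSet, hmax⟩,
    fun ⟨D, hD, hmax⟩ => ⟨D, hmax.measurableSet hH hD, hmax⟩⟩

/-- for an analytic hypergraph `G = (X, H)` on a Polish space (hyperedges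
being finite sets of size at least 2, encoded as duplicate-free lists), there is a Borel
maximal `G`-discrete set iff there is an analytic maximal `G`-discrete set. -/
theorem stmt_18 {X : Type} [TopologicalSpace X] [PolishSpace X]
    [MeasurableSpace X] [BorelSpace X]
    (H : Set (List X)) (hH : AnalyticSet H)
    (hedge : ∀ l ∈ H, l.Nodup ∧ 2 ≤ l.length) :
    (∃ D : Set X, MeasurableSet D ∧ MaxHDiscrete H D) ↔
      (∃ D : Set X, AnalyticSet D ∧ MaxHDiscrete H D) :=
  stmt_18_general H hH
end
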